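/- arXiv:2009.08844 — 3 statements merged into one kernel-verified Lean document; each statement's English description precedes it below -/
import Mathlib

section
/- Huffman achievability: given integer arrival times a_1,...,a_m with weight W = ∑ 2^{a_i}, there exists a binary tree with m leaves, leaf i having depth d_i, such that max_i (a_i + d_i) ≤ ⌈log₂ W⌉. -/
/-- Binary trees whose leaves carry integer arrival times. -/
inductive BTree where
  | leaf : ℤ → BTree
  | node : BTree → BTree → BTree

/-- The delay of a tree: the maximum over leaves of (arrival time + leaf depth). -/
def BTree.delay : BTree → ℤ
  | .leaf a => a
  | .node l r => max l.delay r.delay + 1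

/-- The list of leaf arrival times, left to right. -/
def BTree.leaves : BTree → List ℤ
  | .leaf a => [a]
  | .node l r => l.leaves ++ r.leaves

/-- The list of leaf depths, left to right. -/
def BTree.depths : BTree → List ℕ
  | .leaf _ => [0]
  | .node l r => l.depths.map (· + 1) ++ r.depths.map (· + 1)

/-! Run Huffman's algorithm with `max(x, y) + 1` in place of `x + y`: repeatedly join the two
trees of smallest delays `a ≤ b` of a forest whose weight `∑ 2^delay` is at most `2^D`. The join
replaces `2^a + 2^b` by `2^(b+1)`, and the weight stays at most `2^D`: the weight of the other
trees plus `2^b` is a multiple of `2^b` strictly below `2^D`, which is itself a multiple of `2^b`,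
so adding another `2^b` does not exceed `2^D`. A forest of a single tree of weight at most `2^D`
has delay at most `D`. -/

theorem Real.le_zpow_ceil_logb {b x : ℝ} (hb : 1 < b) (hx : 0 < x) :
    x ≤ b ^ ⌈logb b x⌉ := by
  rw [← rpow_intCast, ← logb_le_iff_le_rpow hb hx]
  exact Int.le_ceil _

theorem List.exists_perm_cons_forall_le {α β : Type*} [LinearOrder β] (f : α → β)
    {l : List α} (hl : l ≠ []) : ∃ x rest, l.Perm (x :: rest) ∧ ∀ z ∈ rest, f x ≤ f z := by
  set le : α → α → Bool := fun x y => decide (f x ≤ f y)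
  have hsorted := List.pairwise_mergeSort (le := le) (by simpa [le] using fun _ _ _ => le_trans)
    (by simp [le, le_total]) l
  obtain ⟨x, rest, hxr⟩ := List.exists_cons_of_ne_nil <|
    List.ne_nil_of_length_pos ((List.mergeSort_perm l le).length_eq ▸ List.length_pos_iff.mpr hl)
  rw [hxr, List.pairwise_cons] at hsorted
  refine ⟨x, rest, hxr ▸ (List.mergeSort_perm l le).symm, fun z hz => ?_⟩
  simpa [le] using hsorted.1 z hz

noncomputable def dyadicSum (as : List ℤ) : ℝ := (as.map fun a => (2 : ℝ) ^ a).sum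

@[simp]
theorem dyadicSum_cons (a : ℤ) (as : List ℤ) : dyadicSum (a :: as) = 2 ^ a + dyadicSum as := by
  simp [dyadicSum]

theorem dyadicSum_nonneg (as : List ℤ) : 0 ≤ dyadicSum as :=
  List.sum_nonneg fun x hx => by
    obtain ⟨a, -, rfl⟩ := List.mem_map.mp hx
    positivity

theorem dyadicSum_pos {as : List ℤ} (h : as ≠ []) : 0 < dyadicSum as := by
  obtain ⟨a, as, rfl⟩ := List.exists_cons_of_ne_nil h
  rw [dyadicSum_cons]
  exact add_pos_of_pos_of_nonneg (by positivity) (dyadicSum_nonneg as)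

theorem List.Perm.dyadicSum_eq {as bs : List ℤ} (h : as.Perm bs) : dyadicSum as = dyadicSum bs :=
  (h.map _).sum_eq

theorem exists_dyadicSum_eq_nat_mul {b : ℤ} :
    ∀ {as : List ℤ}, (∀ a ∈ as, b ≤ a) → ∃ N : ℕ, dyadicSum as = N * 2 ^ b
  | [], _ => ⟨0, by simp [dyadicSum]⟩
  | a :: as, h => by
    obtain ⟨N, hN⟩ := exists_dyadicSum_eq_nat_mul fun c hc => h c (List.mem_cons_of_mem a hc)
    have hab : 0 ≤ a - b := sub_nonneg.mpr (h a List.mem_cons_self)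
    refine ⟨2 ^ (a - b).toNat + N, ?_⟩
    rw [dyadicSum_cons, hN, Nat.cast_add, Nat.cast_pow, Nat.cast_ofNat, ← zpow_natCast,
      Int.toNat_of_nonneg hab, add_mul, ← zpow_add₀ two_ne_zero, sub_add_cancel]

theorem dyadicSum_merge_le {a b D : ℤ} {as : List ℤ} (has : ∀ c ∈ as, b ≤ c)
    (h : dyadicSum (a :: b :: as) ≤ 2 ^ D) : dyadicSum ((b + 1) :: as) ≤ 2 ^ D := by
  have ha : (0 : ℝ) < 2 ^ a := by positivity
  rw [dyadicSum_cons] at h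
  have hbD : b ≤ D := by
    refine (zpow_le_zpow_iff_right₀ (by norm_num : (1 : ℝ) < 2)).mp ?_
    linarith [dyadicSum_cons b as, dyadicSum_nonneg as]
  obtain ⟨N, hN⟩ := exists_dyadicSum_eq_nat_mul (as := b :: as) (b := b) <| by simpa using has
  obtain ⟨M, hM⟩ : ∃ M : ℕ, (2 : ℝ) ^ D = M * 2 ^ b := by
    simpa [dyadicSum] using exists_dyadicSum_eq_nat_mul (as := [D]) (by simpa using hbD)
  have hNM : N + 1 ≤ M := by
    have : (N : ℝ) * 2 ^ b < M * 2 ^ b := by linarith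
    exact_mod_cast lt_of_mul_lt_mul_right this (by positivity)
  calc dyadicSum ((b + 1) :: as) = dyadicSum (b :: as) + 2 ^ b := by
        simp only [dyadicSum_cons, zpow_add_one₀ (two_ne_zero' ℝ)]; ring
    _ = ((N + 1 : ℕ) : ℝ) * 2 ^ b := by push_cast; rw [hN]; ring
    _ ≤ M * 2 ^ b := by gcongr
    _ = 2 ^ D := hM.symm

namespace BTree

theorem exists_leaves_perm_delay_le {D : ℤ} (ts : List BTree) (hne : ts ≠ [])
    (hW : dyadicSum (ts.map delay) ≤ 2 ^ D) :
    ∃ T : BTree, T.leaves.Perm (ts.flatMap leaves) ∧ T.delay ≤ D := by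
  match ts, hne with
  | [t], _ =>
    refine ⟨t, by simp, (zpow_le_zpow_iff_right₀ (by norm_num : (1 : ℝ) < 2)).mp ?_⟩
    simpa [dyadicSum] using hW
  | t :: t' :: us, _ =>
    obtain ⟨x, l, hx, hxl⟩ :=
      List.exists_perm_cons_forall_le delay (l := t :: t' :: us) (by simp)
    obtain ⟨y, rest, hy, hyr⟩ := List.exists_perm_cons_forall_le delay (l := l) <| by
      rintro rfl; simpa using hx.length_eq
    have hperm : (t :: t' :: us).Perm (x :: y :: rest) := hx.trans (hy.cons x)
    have hxy : x.delay ≤ y.delay := hxl y (hy.mem_iff.mpr List.mem_cons_self)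
    have hjoin : (node x y).delay = y.delay + 1 := by simp [delay, hxy]
    have hW' : dyadicSum ((node x y :: rest).map delay) ≤ 2 ^ D := by
      rw [List.map_cons, hjoin]
      refine dyadicSum_merge_le (a := x.delay) (by simpa using hyr) ?_
      exact (hperm.map delay).dyadicSum_eq ▸ hW
    obtain ⟨T, hT, hTD⟩ := exists_leaves_perm_delay_le (node x y :: rest) (by simp) hW'
    refine ⟨T, hT.trans ?_, hTD⟩
    simpa [leaves] using (hperm.flatMap_right leaves).symm
termination_by ts.length
decreasing_by simp [hperm.length_eq]

end BTree

/-- Huffman achievability: given integer arrival times `a₁,…,a_m` with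
`W = ∑ 2^(a_i)`, there is a binary tree on these leaves with
`max_i (a_i + d_i) ≤ ⌈log₂ W⌉`. -/
theorem huffman_achievability (as : List ℤ) (h : as ≠ []) :
    ∃ T : BTree, T.leaves.Perm as ∧
      T.delay ≤ ⌈Real.logb 2 ((as.map (fun a => (2 : ℝ) ^ a)).sum)⌉ := by
  have hleaves : (as.map BTree.leaf).flatMap BTree.leaves = as := by
    simp [List.flatMap_map, BTree.leaves]
  have hW : dyadicSum ((as.map BTree.leaf).map BTree.delay) ≤
      2 ^ ⌈Real.logb 2 (dyadicSum as)⌉ := by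
    simpa [Function.comp_def, BTree.delay] using
      Real.le_zpow_ceil_logb one_lt_two (dyadicSum_pos h)
  obtain ⟨T, hT, hTD⟩ :=
    BTree.exists_leaves_perm_delay_le (as.map BTree.leaf) (by simpa using h) hW
  exact ⟨T, hleaves ▸ hT, hTD⟩
end

section
/- Optimal delay of a multi-input AND circuit: for integer arrival times a_1,...,a_m, the minimum over all binary trees with m leaves of max_i (a_i + d_i) equals ⌈log₂(∑_{i=1}^m 2^{a_i})⌉. -/
noncomputable def kraftSum (l : List ℤ) : ℝ := (l.map fun a => (2 : ℝ) ^ a).sum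

@[simp]
lemma kraftSum_cons (a : ℤ) (l : List ℤ) : kraftSum (a :: l) = 2 ^ a + kraftSum l := by
  simp [kraftSum]

@[simp]
lemma kraftSum_append (l₁ l₂ : List ℤ) : kraftSum (l₁ ++ l₂) = kraftSum l₁ + kraftSum l₂ := by
  simp [kraftSum]

lemma List.Perm.kraftSum_eq {l₁ l₂ : List ℤ} (h : l₁.Perm l₂) : kraftSum l₁ = kraftSum l₂ :=
  (h.map _).sum_eq

lemma kraftSum_nonneg (l : List ℤ) : 0 ≤ kraftSum l :=
  List.sum_nonneg fun _ hx => by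
    obtain ⟨a, -, rfl⟩ := List.mem_map.mp hx
    positivity

lemma kraftSum_pos {l : List ℤ} (h : l ≠ []) : 0 < kraftSum l := by
  obtain ⟨a, l, rfl⟩ := List.exists_cons_of_ne_nil h
  rw [kraftSum_cons]
  exact add_pos_of_pos_of_nonneg (by positivity) (kraftSum_nonneg l)

lemma Real.ceil_logb_le_iff {b x : ℝ} (hb : 1 < b) (hx : 0 < x) (d : ℤ) :
    ⌈logb b x⌉ ≤ d ↔ x ≤ b ^ d := by
  rw [Int.ceil_le, logb_le_iff_le_rpow hb hx, rpow_intCast]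

theorem BTree.kraftSum_leaves_le (T : BTree) : kraftSum T.leaves ≤ 2 ^ T.delay := by
  induction T with
  | leaf a => simp [BTree.leaves, BTree.delay, kraftSum]
  | node L R ihL ihR =>
    have hL : (2 : ℝ) ^ L.delay ≤ 2 ^ max L.delay R.delay :=
      zpow_le_zpow_right₀ one_le_two (le_max_left _ _)
    have hR : (2 : ℝ) ^ R.delay ≤ 2 ^ max L.delay R.delay :=
      zpow_le_zpow_right₀ one_le_two (le_max_right _ _)
    rw [BTree.leaves, kraftSum_append, BTree.delay, zpow_add_one₀ two_ne_zero]
    linarith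

lemma exists_kraftSum_eq_zpow_mul_nat {b : ℤ} {l : List ℤ} (hl : ∀ x ∈ l, b ≤ x) :
    ∃ N : ℕ, kraftSum l = 2 ^ b * N := by
  induction l with
  | nil => exact ⟨0, by simp [kraftSum]⟩
  | cons x l ih =>
    obtain ⟨N, hN⟩ := ih fun y hy => hl y (List.mem_cons_of_mem _ hy)
    obtain ⟨k, hk⟩ := Int.eq_ofNat_of_zero_le (sub_nonneg.mpr (hl x List.mem_cons_self))
    refine ⟨2 ^ k + N, ?_⟩
    rw [kraftSum_cons, hN, show x = b + k by omega, zpow_add₀ two_ne_zero, zpow_natCast]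
    push_cast
    ring

lemma kraftSum_merge_le {a b d : ℤ} {l : List ℤ} (hl : ∀ x ∈ l, b ≤ x)
    (hd : kraftSum (a :: b :: l) ≤ 2 ^ d) : kraftSum ((b + 1) :: l) ≤ 2 ^ d := by
  obtain ⟨N, hN⟩ := exists_kraftSum_eq_zpow_mul_nat hl
  rw [kraftSum_cons, kraftSum_cons, hN] at hd
  have ha : (0 : ℝ) < 2 ^ a := by positivity
  have hb : (0 : ℝ) < 2 ^ b := by positivity
  have hbd : b ≤ d := by
    have : (2 : ℝ) ^ b < 2 ^ d := by nlinarith [mul_nonneg hb.le (Nat.cast_nonneg (α := ℝ) N)]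
    exact ((zpow_lt_zpow_iff_right₀ one_lt_two).mp this).le
  obtain ⟨k, hk⟩ := Int.eq_ofNat_of_zero_le (sub_nonneg.mpr hbd)
  rw [show d = b + k by omega, zpow_add₀ two_ne_zero, zpow_natCast] at hd ⊢
  have hNk : N + 1 < 2 ^ k := by
    exact_mod_cast (lt_of_mul_lt_mul_left (by linarith) hb.le : (N : ℝ) + 1 < 2 ^ k)
  have hNk' : (N : ℝ) + 2 ≤ 2 ^ k := by exact_mod_cast hNk
  rw [kraftSum_cons, hN, zpow_add_one₀ two_ne_zero]
  nlinarith

lemma BTree.exists_delay_le_of_forest (F : List BTree) (hF : F ≠ []) :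
    ∃ T : BTree, T.leaves.Perm (F.flatMap BTree.leaves) ∧
      ∀ d : ℤ, kraftSum (F.map BTree.delay) ≤ 2 ^ d → T.delay ≤ d := by
  induction h : F.length using Nat.strong_induction_on generalizing F with
  | _ n ih =>
  set G := F.mergeSort fun S T => decide (S.delay ≤ T.delay)
  have hGF : G.Perm F := List.mergeSort_perm _ _
  have hG : G.Pairwise fun S T => S.delay ≤ T.delay := by
    simpa using List.pairwise_mergeSort (le := fun S T => decide (S.delay ≤ T.delay))
      (fun _ _ _ h₁ h₂ => decide_eq_true ((of_decide_eq_true h₁).trans (of_decide_eq_true h₂)))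
      (fun S T => by simpa using le_total S.delay T.delay) F
  suffices ∃ T : BTree, T.leaves.Perm (G.flatMap BTree.leaves) ∧
      ∀ d : ℤ, kraftSum (G.map BTree.delay) ≤ 2 ^ d → T.delay ≤ d by
    rw [(hGF.map _).kraftSum_eq] at this
    exact this.imp fun T hT => ⟨hT.1.trans (hGF.flatMap_right _), hT.2⟩
  match G, hGF, hG with
  | [], hGF, _ => exact absurd hGF.symm.eq_nil hF
  | [T], _, _ =>
    refine ⟨T, by simp, fun d hd => (zpow_le_zpow_iff_right₀ (one_lt_two (α := ℝ))).mp ?_⟩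
    simpa [kraftSum] using hd
  | T₁ :: T₂ :: rest, hGF, hG =>
    obtain ⟨h₁, h₂⟩ := List.pairwise_cons.mp hG
    have hlen : (BTree.node T₁ T₂ :: rest).length < n := by
      simp [← h, ← hGF.length_eq]
    obtain ⟨T, hleaves, hdelay⟩ := ih _ hlen _ (List.cons_ne_nil _ _) rfl
    refine ⟨T, by simpa [BTree.leaves] using hleaves, fun d hd => hdelay d ?_⟩
    have hmax : (BTree.node T₁ T₂).delay = T₂.delay + 1 := by
      rw [BTree.delay, max_eq_right (h₁ T₂ List.mem_cons_self)]
    rw [List.map_cons, hmax]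
    refine kraftSum_merge_le ?_ hd
    simpa using (List.pairwise_cons.mp h₂).1

theorem BTree.exists_delay_le (as : List ℤ) (h : as ≠ []) :
    ∃ T : BTree, T.leaves.Perm as ∧ ∀ d : ℤ, kraftSum as ≤ 2 ^ d → T.delay ≤ d := by
  simpa [List.flatMap_map, BTree.leaves, Function.comp_def, BTree.delay] using
    BTree.exists_delay_le_of_forest (as.map .leaf) (by simpa using h)

/-- Optimal delay of a multi-input AND: the minimum delay over all binary trees
with leaf arrival times `a₁,…,a_m` equals `⌈log₂ (∑_i 2^(a_i))⌉`. -/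
theorem optimal_and_delay (as : List ℤ) (h : as ≠ []) :
    IsLeast {d : ℤ | ∃ T : BTree, T.leaves.Perm as ∧ T.delay = d}
      ⌈Real.logb 2 ((as.map (fun a => (2 : ℝ) ^ a)).sum)⌉ := by
  change IsLeast _ ⌈Real.logb 2 (kraftSum as)⌉
  have hpos : 0 < kraftSum as := kraftSum_pos h
  have lower (T : BTree) (hT : T.leaves.Perm as) : ⌈Real.logb 2 (kraftSum as)⌉ ≤ T.delay :=
    (Real.ceil_logb_le_iff one_lt_two hpos _).mpr (hT.kraftSum_eq ▸ T.kraftSum_leaves_le)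
  obtain ⟨T, hT, upper⟩ := BTree.exists_delay_le as h
  refine ⟨⟨T, hT, le_antisymm (upper _ ((Real.ceil_logb_le_iff one_lt_two hpos _).mp le_rfl)) (lower T hT)⟩, ?_⟩
  rintro _ ⟨T', hT', rfl⟩
  exact lower T' hT'
end

section
/- Delay bound via weight: if C is an undetermined circuit whose output gate has k predecessors with integer arrival times d_1,...,d_k, then replacing the output gate by a Huffman tree of fan-in-2 gates of the same type yields a circuit of the same Boolean function with delay at most ⌈log₂(∑_{i=1}^k 2^{d_i})⌉. -/
/-- Binary combination trees whose leaves carry a Boolean value and an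
integer arrival time. -/
inductive CTree where
  | leaf : Bool → ℤ → CTree
  | node : CTree → CTree → CTree

/-- The delay of a combination tree. -/
def CTree.delay : CTree → ℤ
  | .leaf _ a => a
  | .node l r => max l.delay r.delay + 1

/-- The leaves (value, arrival time), left to right. -/
def CTree.leaves : CTree → List (Bool × ℤ)
  | .leaf b a => [(b, a)]
  | .node l r => l.leaves ++ r.leaves

/-- Evaluation of a combination tree using a binary Boolean operation. -/
def CTree.eval (op : Bool → Bool → Bool) : CTree → Bool
  | .leaf b _ => b
  | .node l r => op (l.eval op) (r.eval op)

/-!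
Huffman's greedy step merges the two trees of smallest delays `d₁ ≤ d₂` into one of delay
`d₂ + 1`. It keeps the weight `∑ 2 ^ delay` of the forest below `2 ^ D`: the remaining weights
`R` and `2 ^ D` are multiples of `2 ^ d₂`, so `2 ^ d₁ + 2 ^ d₂ + R ≤ 2 ^ D` with `2 ^ d₁ > 0`
forces `2 ^ d₂ + R ≤ 2 ^ D - 2 ^ d₂`. Once a single tree is left, its weight `2 ^ delay ≤ 2 ^ D`
bounds its delay by `D = ⌈log₂ W⌉`. Associativity and commutativity make the value of any tree
the fold of its leaves in any order.
-/

theorem List.foldl_eq_of_perm_cons {α : Type*} {op : α → α → α} [Std.Associative op]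
    [Std.Commutative op] {a b : α} {t s : List α} (h : (a :: t).Perm (b :: s)) :
    t.foldl op a = s.foldl op b := by
  by_cases hab : a = b
  · subst hab
    exact h.cons_inv.foldl_eq a
  · classical
    have ha : a ∈ s := (List.mem_cons.mp (h.subset List.mem_cons_self)).resolve_left hab
    have hs : s.Perm (a :: s.erase a) := List.perm_cons_erase ha
    have ht : t.Perm (b :: s.erase a) :=
      (h.trans ((hs.cons b).trans (List.Perm.swap a b _))).cons_inv
    rw [ht.foldl_eq, hs.foldl_eq, List.foldl_cons, List.foldl_cons,
      Std.Commutative.comm (op := op) a b]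

theorem add_le_of_lt_of_mem_zmultiples {R : Type*} [Ring R] [LinearOrder R]
    [IsStrictOrderedRing R] {c x y : R} (hc : 0 < c) (hx : x ∈ AddSubgroup.zmultiples c)
    (hy : y ∈ AddSubgroup.zmultiples c) (hxy : x < y) : x + c ≤ y := by
  obtain ⟨k, rfl⟩ := AddSubgroup.mem_zmultiples_iff.mp hx
  obtain ⟨j, rfl⟩ := AddSubgroup.mem_zmultiples_iff.mp hy
  have hkj : k < j := lt_of_smul_lt_smul_right hxy hc.le
  calc k • c + c = (k + 1) • c := by rw [add_zsmul, one_zsmul]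
    _ ≤ j • c := zsmul_le_zsmul_left hc.le (Int.add_one_le_of_lt hkj)

theorem two_zpow_mem_zmultiples {d e : ℤ} (h : d ≤ e) :
    (2 : ℝ) ^ e ∈ AddSubgroup.zmultiples ((2 : ℝ) ^ d) := by
  refine AddSubgroup.mem_zmultiples_iff.mpr ⟨2 ^ (e - d).toNat, ?_⟩
  rw [zsmul_eq_mul, Int.cast_pow, Int.cast_ofNat, ← zpow_natCast, ← zpow_add₀ two_ne_zero,
    Int.toNat_of_nonneg (by omega), sub_add_cancel]

theorem two_zpow_add_le_of_mem_zmultiples {d₁ d₂ D : ℤ} {r : ℝ}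
    (hr : r ∈ AddSubgroup.zmultiples ((2 : ℝ) ^ d₂)) (hr₀ : 0 ≤ r)
    (h : 2 ^ d₁ + (2 ^ d₂ + r) ≤ (2 : ℝ) ^ D) : 2 ^ (d₂ + 1) + r ≤ (2 : ℝ) ^ D := by
  have h₁ : (0 : ℝ) < 2 ^ d₁ := zpow_pos two_pos d₁
  have hD : d₂ ≤ D := (zpow_le_zpow_iff_right₀ (one_lt_two : (1 : ℝ) < 2)).mp (by linarith)
  have key := add_le_of_lt_of_mem_zmultiples (zpow_pos two_pos d₂)
    (add_mem (AddSubgroup.mem_zmultiples _) hr) (two_zpow_mem_zmultiples hD) (by linarith)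
  rw [zpow_add_one₀ two_ne_zero]
  linarith

theorem le_two_zpow_ceil_logb {x : ℝ} (hx : 0 < x) : x ≤ 2 ^ ⌈Real.logb 2 x⌉ := by
  calc x = 2 ^ Real.logb 2 x := (Real.rpow_logb two_pos (by norm_num) hx).symm
    _ ≤ 2 ^ (⌈Real.logb 2 x⌉ : ℝ) := Real.rpow_le_rpow_of_exponent_le one_le_two (Int.le_ceil _)
    _ = 2 ^ ⌈Real.logb 2 x⌉ := Real.rpow_intCast 2 _

namespace CTree

theorem eval_eq_foldl (op : Bool → Bool → Bool) [Std.Associative op] :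
    ∀ T : CTree, ∃ a t, T.leaves.map Prod.fst = a :: t ∧ T.eval op = t.foldl op a
  | .leaf b _ => ⟨b, [], rfl, rfl⟩
  | .node l r => by
    obtain ⟨a, t, hl, hla⟩ := eval_eq_foldl op l
    obtain ⟨b, s, hr, hrb⟩ := eval_eq_foldl op r
    refine ⟨a, t ++ b :: s, by simp [leaves, hl, hr], ?_⟩
    rw [eval, hla, hrb, List.foldl_append, List.foldl_cons, List.foldl_assoc]

noncomputable def forestWeight (ts : List CTree) : ℝ := (ts.map fun t => (2 : ℝ) ^ t.delay).sum

theorem exists_merge_of_forestWeight_le {ts : List CTree} (hts : 2 ≤ ts.length) {D : ℤ}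
    (hw : forestWeight ts ≤ 2 ^ D) :
    ∃ ts' : List CTree, ts'.length + 1 = ts.length ∧
      (ts'.flatMap leaves).Perm (ts.flatMap leaves) ∧ forestWeight ts' ≤ 2 ^ D := by
  have hperm := ts.mergeSort_perm fun t u => decide (t.delay ≤ u.delay)
  have hsorted := List.pairwise_mergeSort (le := fun t u : CTree => decide (t.delay ≤ u.delay))
    (fun _ _ _ h₁ h₂ => by simp only [decide_eq_true_eq] at *; omega)
    (fun _ _ => by simp only [Bool.or_eq_true, decide_eq_true_eq]; omega) ts
  generalize ts.mergeSort _ = s at hperm hsorted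
  obtain _ | ⟨t₁, _ | ⟨t₂, rest⟩⟩ := s
  · simp [← hperm.length_eq] at hts
  · simp [← hperm.length_eq] at hts
  simp only [List.pairwise_cons, List.mem_cons, forall_eq_or_imp, decide_eq_true_eq] at hsorted
  obtain ⟨⟨h₁₂, -⟩, h₂rest, -⟩ := hsorted
  refine ⟨node t₁ t₂ :: rest, by simp [← hperm.length_eq], ?_, ?_⟩
  · simpa [leaves, List.append_assoc] using hperm.flatMap_right leaves
  · have hrest : (rest.map fun t => (2 : ℝ) ^ t.delay).sum ∈
        AddSubgroup.zmultiples ((2 : ℝ) ^ t₂.delay) :=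
      AddSubgroup.list_sum_mem _ fun x hx => by
        obtain ⟨t, ht, rfl⟩ := List.mem_map.mp hx
        exact two_zpow_mem_zmultiples (h₂rest t ht)
    rw [forestWeight, ← (hperm.map _).sum_eq] at hw
    simp only [forestWeight, List.map_cons, List.sum_cons, delay, max_eq_right h₁₂] at hw ⊢
    exact two_zpow_add_le_of_mem_zmultiples hrest
      (List.sum_nonneg fun x hx => by obtain ⟨t, -, rfl⟩ := List.mem_map.mp hx; positivity) hw

theorem exists_delay_le_of_forestWeight_le (D : ℤ) :
    ∀ (n : ℕ) (ts : List CTree), ts.length = n + 1 → forestWeight ts ≤ 2 ^ D →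
      ∃ T : CTree, T.leaves.Perm (ts.flatMap leaves) ∧ T.delay ≤ D
  | 0, ts, hlen, hw => by
    obtain ⟨t, rfl⟩ := List.length_eq_one_iff.mp hlen
    simp only [forestWeight, List.map_cons, List.map_nil, List.sum_cons, List.sum_nil,
      add_zero] at hw
    exact ⟨t, by simp, (zpow_le_zpow_iff_right₀ one_lt_two).mp hw⟩
  | n + 1, ts, hlen, hw => by
    obtain ⟨ts', hlen', hperm, hw'⟩ := exists_merge_of_forestWeight_le (by omega) hw
    obtain ⟨T, hT, hdelay⟩ := exists_delay_le_of_forestWeight_le D n ts' (by omega) hw'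
    exact ⟨T, hT.trans hperm, hdelay⟩

end CTree

open CTree in
/-- Huffman replacement of a multi-input associative commutative gate:
given predecessors `(b₀,d₀),…,(b_k,d_k)`, there is a fan-in-2 realization
computing the same function with delay at most `⌈log₂ ∑ 2^(d_i)⌉`. -/
theorem huffman_gate_replacement (op : Bool → Bool → Bool)
    (hassoc : Std.Associative op) (hcomm : Std.Commutative op)
    (p : Bool × ℤ) (ps : List (Bool × ℤ)) :
    ∃ T : CTree, T.leaves.Perm (p :: ps) ∧
      T.eval op = (ps.map Prod.fst).foldl op p.1 ∧
      T.delay ≤ ⌈Real.logb 2 (((p :: ps).map (fun q => (2 : ℝ) ^ q.2)).sum)⌉ := by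
  set inputs := (p :: ps).map fun q => leaf q.1 q.2
  have hweight : forestWeight inputs = ((p :: ps).map (fun q => (2 : ℝ) ^ q.2)).sum := by
    simp [inputs, forestWeight, delay, Function.comp_def]
  have hpos : 0 < forestWeight inputs :=
    List.sum_pos _ (by simp [zpow_pos]) (by simp [inputs])
  obtain ⟨T, hforest, hdelay⟩ := exists_delay_le_of_forestWeight_le _ ps.length inputs
    (by simp [inputs]) (le_two_zpow_ceil_logb hpos)
  rw [hweight] at hdelay
  have hleaves : T.leaves.Perm (p :: ps) := by
    simpa [inputs, leaves, List.flatMap_map, List.flatMap_singleton'] using hforest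
  obtain ⟨a, t, hfst, heval⟩ := eval_eq_foldl op T
  refine ⟨T, hleaves, heval.trans (List.foldl_eq_of_perm_cons ?_), hdelay⟩
  simpa [hfst] using hleaves.map Prod.fst
end
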